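/- arXiv:math-ph/0007032 — 4 statements merged into one kernel-verified Lean document; each statement's English description precedes it below -/
import Mathlib

section
/- Proposition 3, part 1 (maps with invariant frame fields are left-equivariant). Let U : ℝ³ → G be a smooth map such that ∂_y(U⁻¹∂_μU) = 0 identically for every μ ∈ {x,y,t} (i.e. the frame field K_μ := U⁻¹∂_μU is independent of y). Then there exist a constant element L ∈ 𝔤 and a smooth map V : ℝ² → G such that U(x,y,t) = exp(yL)·V(x,t) for all (x,y,t) ∈ ℝ³. -/
/-!
STATEMENT 10 (Proposition 3, part 1): a smooth map `U : ℝ³ → G` whose frame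
field is independent of `y` has the left-equivariant form
`U(x,y,t) = exp(yL)·V(x,t)`.
-/

open scoped BigOperators

attribute [local instance] Matrix.linftyOpNormedAddCommGroup Matrix.linftyOpNormedSpace
  Matrix.linftyOpNormedRing Matrix.linftyOpNormedAlgebra

attribute [local instance] LieRing.ofAssociativeRing LieAlgebra.ofAssociativeAlgebra

noncomputable section

abbrev Mat (N : ℕ) := Matrix (Fin N) (Fin N) ℝ

/-- Directional derivative. -/
def pd {E F : Type*} [NormedAddCommGroup E] [NormedSpace ℝ E]
    [NormedAddCommGroup F] [NormedSpace ℝ F] (d : E) (f : E → F) (z : E) : F :=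
  fderiv ℝ f z d

/-- The coordinate directions `x, y, t` on `ℝ^{2+1} = ℝ³`. -/
def dir3 : Fin 3 → ℝ × ℝ × ℝ := ![(1, 0, 0), (0, 1, 0), (0, 0, 1)]

/-- The frame field `K_μ = Ψ⁻¹ ∂_μ Ψ` of a map `Ψ : ℝ³ → GL(N,ℝ)`,
in the direction `d`. -/
def Kf {N : ℕ} (Ψ : ℝ × ℝ × ℝ → Mat N) (d : ℝ × ℝ × ℝ) (z : ℝ × ℝ × ℝ) : Mat N :=
  Ring.inverse (Ψ z) * fderiv ℝ Ψ z d

/-!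
The right current `A = (∂_y U) U⁻¹` is conjugate to the `y`-derivative of the frame field:
`∂_v A = U (∂_y K_v) U⁻¹`, by the product rule and the symmetry of second derivatives. Hence `A`
is a constant `L`, and `U` solves the linear equation `∂_y U = L U`, so
`U(x,y,t) = exp(yL) U(x,0,t)`. Finally `exp(sL) = U(0,s,0) U(0,0,0)⁻¹` lies in `G`, so `L ∈ 𝔤`.
-/

open ContinuousLinearMap

section

variable {E R : Type*} [NormedAddCommGroup E] [NormedSpace ℝ E] [NormedRing R] [NormedAlgebra ℝ R]

theorem fderiv_fun_mul_apply' {a b : E → R} {z : E} (ha : DifferentiableAt ℝ a z)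
    (hb : DifferentiableAt ℝ b z) (v : E) :
    fderiv ℝ (fun y => a y * b y) z v = a z * fderiv ℝ b z v + fderiv ℝ a z v * b z := by
  rw [fderiv_fun_mul' ha hb]
  simp

variable [CompleteSpace R]

theorem HasFDerivAt.ringInverse {f : E → R} {f' : E →L[ℝ] R} {z : E}
    (hf : HasFDerivAt f f' z) (hz : IsUnit (f z)) :
    HasFDerivAt (fun y => Ring.inverse (f y))
      ((-mulLeftRight ℝ R (Ring.inverse (f z)) (Ring.inverse (f z))).comp f') z := by
  have h := hasFDerivAt_ringInverse (𝕜 := ℝ) hz.unit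
  rw [← Ring.inverse_unit, hz.unit_spec] at h
  exact h.comp z hf

theorem fderiv_ringInverse_apply {f : E → R} {z : E} (hf : DifferentiableAt ℝ f z)
    (hz : IsUnit (f z)) (v : E) :
    fderiv ℝ (fun y => Ring.inverse (f y)) z v
      = -(Ring.inverse (f z) * fderiv ℝ f z v * Ring.inverse (f z)) := by
  rw [(hf.hasFDerivAt.ringInverse hz).fderiv]
  simp

theorem fderiv_fderiv_mul_ringInverse_apply {U : E → R} {z : E} (hU : ContDiffAt ℝ 2 U z)
    (hz : IsUnit (U z)) (v w : E) :
    fderiv ℝ (fun y => fderiv ℝ U y w * Ring.inverse (U y)) z v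
      = U z * fderiv ℝ (fun y => Ring.inverse (U y) * fderiv ℝ U y v) z w
          * Ring.inverse (U z) := by
  have hUd : DifferentiableAt ℝ U z := hU.differentiableAt (by norm_num)
  have hDd : DifferentiableAt ℝ (fderiv ℝ U) z :=
    (hU.fderiv_right (m := 1) (by norm_num)).differentiableAt (by norm_num)
  have hsymm : fderiv ℝ (fderiv ℝ U) z v w = fderiv ℝ (fderiv ℝ U) z w v :=
    (hU.isSymmSndFDerivAt (by simp)) v w
  have hinvd : DifferentiableAt ℝ (fun y => Ring.inverse (U y)) z :=
    (hUd.hasFDerivAt.ringInverse hz).differentiableAt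
  have hDapply (u : E) : HasFDerivAt (fun y => fderiv ℝ U y u)
      ((fderiv ℝ (fderiv ℝ U) z).flip u) z := by
    simpa using hDd.hasFDerivAt.clm_apply (hasFDerivAt_const u z)
  rw [fderiv_fun_mul_apply' (hDapply w).differentiableAt hinvd,
    fderiv_fun_mul_apply' hinvd (hDapply v).differentiableAt,
    fderiv_ringInverse_apply hUd hz, fderiv_ringInverse_apply hUd hz,
    (hDapply v).fderiv, (hDapply w).fderiv, flip_apply, flip_apply, hsymm]
  have hmul_inv : U z * Ring.inverse (U z) = 1 := Ring.mul_inverse_cancel _ hz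
  simp only [mul_add, add_mul, mul_neg, neg_mul, ← mul_assoc, hmul_inv, one_mul]
  abel

theorem eq_exp_smul_mul_of_hasDerivAt {f : ℝ → R} {L : R}
    (hf : ∀ s, HasDerivAt f (L * f s) s) (s : ℝ) :
    f s = NormedSpace.exp (s • L) * f 0 := by
  -- `NormedSpace.exp_add_of_commute` is stated for Banach `ℚ`-algebras
  let : NormedAlgebra ℚ R := NormedAlgebra.restrictScalars ℚ ℝ R
  set W : ℝ → R := fun s => NormedSpace.exp (s • -L) * f s
  have hW (s : ℝ) : HasDerivAt W 0 s := by
    refine ((hasDerivAt_exp_smul_const (-L) s).mul (hf s)).congr_deriv ?_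
    rw [mul_neg, ← mul_assoc, neg_mul, neg_add_cancel]
  have hWconst : W s = W 0 :=
    is_const_of_deriv_eq_zero (fun s => (hW s).differentiableAt) (fun s => (hW s).deriv) s 0
  calc f s = NormedSpace.exp (s • L) * W s := by
        rw [← mul_assoc, smul_neg, ← NormedSpace.exp_add_of_commute ((Commute.refl _).neg_right),
          add_neg_cancel, NormedSpace.exp_zero, one_mul]
    _ = NormedSpace.exp (s • L) * f 0 := by rw [hWconst]; simp [W]

end

theorem ContinuousLinearMap.eq_zero_of_apply_dir3 {F : Type*} [NormedAddCommGroup F]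
    [NormedSpace ℝ F] (f : ℝ × ℝ × ℝ →L[ℝ] F) (h : ∀ μ, f (dir3 μ) = 0) : f = 0 := by
  refine ContinuousLinearMap.ext fun ⟨a, b, c⟩ => ?_
  have hdecomp : ((a, b, c) : ℝ × ℝ × ℝ) = a • dir3 0 + b • dir3 1 + c • dir3 2 := by
    simp [dir3]
  simp [hdecomp, h]

theorem exists_fderiv_apply_dir3_one_eq_mul {R : Type*} [NormedRing R] [NormedAlgebra ℝ R]
    [CompleteSpace R] {U : ℝ × ℝ × ℝ → R} (hU : ContDiff ℝ 2 U) (hunit : ∀ z, IsUnit (U z))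
    (hframe : ∀ μ z,
      fderiv ℝ (fun y => Ring.inverse (U y) * fderiv ℝ U y (dir3 μ)) z (dir3 1) = 0) :
    ∃ L : R, ∀ z, fderiv ℝ U z (dir3 1) = L * U z := by
  set A : ℝ × ℝ × ℝ → R := fun z => fderiv ℝ U z (dir3 1) * Ring.inverse (U z)
  have hAd : Differentiable ℝ A := fun z =>
    (((hU.fderiv_right (m := 1) le_rfl).differentiable one_ne_zero z).clm_apply
      (differentiableAt_const _)).mul
    (((hU.differentiable (by norm_num) z).hasFDerivAt.ringInverse (hunit z)).differentiableAt)
  have hA0 (z) : fderiv ℝ A z = 0 := ContinuousLinearMap.eq_zero_of_apply_dir3 _ fun μ => by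
    rw [fderiv_fderiv_mul_ringInverse_apply hU.contDiffAt (hunit z), hframe, mul_zero, zero_mul]
  refine ⟨A 0, fun z => ?_⟩
  rw [← is_const_of_fderiv_eq_zero hAd hA0 z 0, mul_assoc,
    Ring.inverse_mul_cancel _ (hunit z), mul_one]

theorem invariant_frame_field_implies_left_equivariant_general
    {N : ℕ}
    -- `G`, a closed subgroup of `GL(N,ℝ)`
    (GSet : Set (Mat N))
    (hGmul : ∀ a ∈ GSet, ∀ b ∈ GSet, a * b ∈ GSet)
    (hGinv : ∀ a ∈ GSet, IsUnit a ∧ Ring.inverse a ∈ GSet)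
    -- `𝔤`, the Lie algebra of `G`
    (𝔤 : LieSubalgebra ℝ (Mat N))
    (hLie : ∀ A : Mat N, A ∈ 𝔤 ↔ ∀ s : ℝ, NormedSpace.exp (s • A) ∈ GSet)
    -- a smooth map `U : ℝ³ → G` whose frame field is independent of `y`
    (U : ℝ × ℝ × ℝ → Mat N) (hU : ContDiff ℝ (⊤ : ℕ∞) U) (hUG : ∀ z, U z ∈ GSet)
    (hinv : ∀ μ : Fin 3, ∀ z : ℝ × ℝ × ℝ, pd (dir3 1) (Kf U (dir3 μ)) z = 0) :
    ∃ L ∈ 𝔤, ∃ V : ℝ × ℝ → Mat N,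
      ContDiff ℝ (⊤ : ℕ∞) V ∧ (∀ q, V q ∈ GSet) ∧
      ∀ x y t : ℝ, U (x, y, t) = NormedSpace.exp (y • L) * V (x, t) := by
  have hunit (z) : IsUnit (U z) := (hGinv _ (hUG z)).1
  obtain ⟨L, hL⟩ := exists_fderiv_apply_dir3_one_eq_mul
    (hU.of_le (by norm_cast)) hunit hinv
  have hUy (x t s : ℝ) : HasDerivAt (fun s => U (x, s, t)) (L * U (x, s, t)) s := by
    rw [← hL]
    exact (hU.differentiable (by simp) _).hasFDerivAt.comp_hasDerivAt s
      ((hasDerivAt_const s x).prodMk ((hasDerivAt_id s).prodMk (hasDerivAt_const s t)))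
  have hsplit (x y t : ℝ) : U (x, y, t) = NormedSpace.exp (y • L) * U (x, 0, t) :=
    eq_exp_smul_mul_of_hasDerivAt (hUy x t) y
  refine ⟨L, (hLie L).2 fun s => ?_, fun q => U (q.1, 0, q.2),
    hU.comp (contDiff_fst.prodMk (contDiff_const.prodMk contDiff_snd)), fun q => hUG _, hsplit⟩
  have hexp : NormedSpace.exp (s • L) = U (0, s, 0) * Ring.inverse (U (0, 0, 0)) := by
    rw [hsplit 0 s 0, mul_assoc, Ring.mul_inverse_cancel _ (hunit _), mul_one]
  rw [hexp]
  exact hGmul _ (hUG _) _ (hGinv _ (hUG _)).2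

/-- **Proposition 3, part 1: maps with invariant frame fields are
left-equivariant.** -/
theorem invariant_frame_field_implies_left_equivariant
    {N : ℕ}
    -- `G`, a closed subgroup of `GL(N,ℝ)`
    (GSet : Set (Mat N))
    (hG1 : (1 : Mat N) ∈ GSet)
    (hGmul : ∀ a ∈ GSet, ∀ b ∈ GSet, a * b ∈ GSet)
    (hGinv : ∀ a ∈ GSet, IsUnit a ∧ Ring.inverse a ∈ GSet)
    (hGclosed : IsClosed {u : (Mat N)ˣ | (u : Mat N) ∈ GSet})
    -- `𝔤`, the Lie algebra of `G`
    (𝔤 : LieSubalgebra ℝ (Mat N))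
    (hLie : ∀ A : Mat N, A ∈ 𝔤 ↔ ∀ s : ℝ, NormedSpace.exp (s • A) ∈ GSet)
    -- a smooth map `U : ℝ³ → G` whose frame field is independent of `y`
    (U : ℝ × ℝ × ℝ → Mat N) (hU : ContDiff ℝ (⊤ : ℕ∞) U) (hUG : ∀ z, U z ∈ GSet)
    (hinv : ∀ μ : Fin 3, ∀ z : ℝ × ℝ × ℝ, pd (dir3 1) (Kf U (dir3 μ)) z = 0) :
    ∃ L ∈ 𝔤, ∃ V : ℝ × ℝ → Mat N,
      ContDiff ℝ (⊤ : ℕ∞) V ∧ (∀ q, V q ∈ GSet) ∧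
      ∀ x y t : ℝ, U (x, y, t) = NormedSpace.exp (y • L) * V (x, t) :=
  invariant_frame_field_implies_left_equivariant_general GSet hGmul hGinv 𝔤 hLie U hU hUG hinv

end
end

section
/- Proposition 3, part 2 (maps with equivariant frame fields are conjugate-equivariant). Let U : ℝ³ → G be a smooth map, and suppose there exist a constant element A ∈ 𝔤 and smooth maps f_μ : ℝ² → 𝔤 (μ ∈ {x,y,t}) such that U⁻¹∂_μU (x,y,t) = exp(−yA)·f_μ(x,t)·exp(yA) for all (x,y,t) and all μ. Then there exist a constant element L ∈ 𝔤 and a smooth map V : ℝ² → G such that U(x,y,t) = exp(yL)·V(x,t)·exp(yA) for all (x,y,t) ∈ ℝ³; in other words, U is conjugate-translation equivariant with R = A. -/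
/-!
Gauge away the `y`-dependence: `Ũ = U·exp(−yA)` has left frame field `Ũ⁻¹∂_μŨ = f_μ(x,t) − δ_{μy}A`,
independent of `y`. Symmetry of second derivatives then shows that the right frame field
`∂_yŨ·Ũ⁻¹` has vanishing derivative, so it is a constant `L`, conjugate to `f_y(0,0) − A` and
hence in `𝔤`. Integrating the linear ODE `∂_yŨ = L·Ũ` gives `Ũ(x,y,t) = exp(yL)·U(x,0,t)`.
-/

open scoped BigOperators

attribute [local instance] Matrix.linftyOpNormedAddCommGroup Matrix.linftyOpNormedSpace
  Matrix.linftyOpNormedRing Matrix.linftyOpNormedAlgebra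

attribute [local instance] LieRing.ofAssociativeRing

noncomputable section

namespace FrameField

open NormedSpace

section General

variable {E F R : Type*} [NormedAddCommGroup E] [NormedSpace ℝ E]
  [NormedAddCommGroup F] [NormedSpace ℝ F]
  [NormedRing R] [NormedAlgebra ℝ R]

lemma fderiv_fun_mul_apply {a b : E → R} {z : E} (ha : DifferentiableAt ℝ a z)
    (hb : DifferentiableAt ℝ b z) (d : E) :
    fderiv ℝ (fun w => a w * b w) z d = a z * fderiv ℝ b z d + fderiv ℝ a z d * b z := by
  rw [fderiv_fun_mul' ha hb]
  simp [MulOpposite.smul_eq_mul_unop]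

variable [CompleteSpace R]

lemma fderiv_inverse_apply {Φ : E → R} {z : E} (hΦ : DifferentiableAt ℝ Φ z)
    (hz : IsUnit (Φ z)) (d : E) :
    fderiv ℝ (fun w => Ring.inverse (Φ w)) z d
      = -(Ring.inverse (Φ z) * fderiv ℝ Φ z d * Ring.inverse (Φ z)) := by
  obtain ⟨u, hu⟩ := hz
  have hinv := hasFDerivAt_ringInverse (𝕜 := ℝ) u
  rw [hu] at hinv
  have h := (hinv.comp z hΦ.hasFDerivAt).fderiv
  rw [Function.comp_def] at h
  rw [h, ← hu, Ring.inverse_unit]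
  simp [mul_assoc]

lemma fderiv_fderiv_apply {Φ : E → F} {z : E} (hΦ : DifferentiableAt ℝ (fderiv ℝ Φ) z)
    (u d : E) : fderiv ℝ (fun w => fderiv ℝ Φ w u) z d = fderiv ℝ (fderiv ℝ Φ) z d u := by
  have h := ((ContinuousLinearMap.apply ℝ F u).hasFDerivAt.comp z hΦ.hasFDerivAt).fderiv
  simp only [Function.comp_def, ContinuousLinearMap.apply_apply] at h
  simp [h]

lemma fderiv_fderiv_apply_comm {Φ : E → F} (hΦ : ContDiff ℝ 2 Φ) (z u d : E) :
    fderiv ℝ (fun w => fderiv ℝ Φ w u) z d = fderiv ℝ (fun w => fderiv ℝ Φ w d) z u := by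
  have h2 : DifferentiableAt ℝ (fderiv ℝ Φ) z :=
    (hΦ.fderiv_right (m := 1) le_rfl).differentiable one_ne_zero z
  rw [fderiv_fderiv_apply h2, fderiv_fderiv_apply h2,
    (hΦ.contDiffAt.isSymmSndFDerivAt (by simp)).eq]

lemma fderiv_apply_eq_zero_of_add_smul_eq {φ : E → F} {v : E}
    (h : ∀ z (s : ℝ), φ (z + s • v) = φ z) (z : E) : fderiv ℝ φ z v = 0 := by
  by_cases hφ : DifferentiableAt ℝ φ z
  · have hline : HasDerivAt (fun s : ℝ => z + s • v) v 0 := by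
      simpa using ((hasDerivAt_id (0 : ℝ)).smul_const v).const_add z
    have hφline := hφ.hasFDerivAt.comp_hasDerivAt_of_eq 0 hline (by simp)
    rw [Function.comp_def] at hφline
    simp only [h] at hφline
    exact hφline.unique (hasDerivAt_const 0 (φ z))
  · simp [fderiv_zero_of_not_differentiableAt hφ]

lemma contDiff_exp {n : WithTop ℕ∞} : ContDiff ℝ n (exp : R → R) :=
  AnalyticOnNhd.contDiff fun x _ => exp_analytic (𝕂 := ℝ) x

lemma exp_mul_exp_neg (x : R) : exp x * exp (-x) = 1 := by
  let +nondep : NormedAlgebra ℚ R := .restrictScalars ℚ ℝ R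
  rw [← Ring.inverse_exp, Ring.mul_inverse_cancel _ (isUnit_exp x)]

lemma exp_neg_mul_exp (x : R) : exp (-x) * exp x = 1 := by
  simpa using exp_mul_exp_neg (-x)

lemma exp_smul_mul_exp_neg_smul (x : R) (s : ℝ) : exp (s • x) * exp ((-s) • x) = 1 := by
  rw [neg_smul, exp_mul_exp_neg]

end General

section Frames

variable {E R : Type*} [NormedAddCommGroup E] [NormedSpace ℝ E]
  [NormedRing R] [NormedAlgebra ℝ R]

-- `Kf` is the case `E = ℝ³`, `R = Mat N`.
def leftFrame (Φ : E → R) (d z : E) : R := Ring.inverse (Φ z) * fderiv ℝ Φ z d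

def rightFrame (Φ : E → R) (d z : E) : R := fderiv ℝ Φ z d * Ring.inverse (Φ z)

variable {Φ : E → R} {z : E}

lemma fderiv_apply_eq_mul_leftFrame (hz : IsUnit (Φ z)) (d : E) :
    fderiv ℝ Φ z d = Φ z * leftFrame Φ d z := by
  rw [leftFrame, ← mul_assoc, Ring.mul_inverse_cancel _ hz, one_mul]

lemma fderiv_apply_eq_rightFrame_mul (hz : IsUnit (Φ z)) (d : E) :
    fderiv ℝ Φ z d = rightFrame Φ d z * Φ z := by
  rw [rightFrame, mul_assoc, Ring.inverse_mul_cancel _ hz, mul_one]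

lemma rightFrame_eq_conj_leftFrame (hz : IsUnit (Φ z)) (d : E) :
    rightFrame Φ d z = Φ z * leftFrame Φ d z * Ring.inverse (Φ z) := by
  rw [rightFrame, fderiv_apply_eq_mul_leftFrame hz]

variable [CompleteSpace R]

theorem rightFrame_eq_of_fderiv_leftFrame_eq_zero {v : E} (hΦ : ContDiff ℝ 2 Φ)
    (hunit : ∀ z, IsUnit (Φ z)) (hv : ∀ d z, fderiv ℝ (leftFrame Φ d) z v = 0) (z z' : E) :
    rightFrame Φ v z = rightFrame Φ v z' := by
  have hΦ1 : Differentiable ℝ Φ := hΦ.differentiable two_ne_zero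
  have hΦ2 : Differentiable ℝ (fderiv ℝ Φ) :=
    (hΦ.fderiv_right (m := 1) le_rfl).differentiable one_ne_zero
  have hdir : ∀ d, Differentiable ℝ (fun w => fderiv ℝ Φ w d) := fun d w =>
    (hΦ2 w).clm_apply (differentiableAt_const d)
  have hinv : Differentiable ℝ (fun w => Ring.inverse (Φ w)) := hΦ1.inverse hunit
  have hleft : ∀ d, Differentiable ℝ (leftFrame Φ d) := fun d => hinv.mul (hdir d)
  have hsecond : ∀ d z, fderiv ℝ (fun w => fderiv ℝ Φ w v) z d
      = Φ z * leftFrame Φ v z * leftFrame Φ d z := by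
    intro d z
    have hfun : (fun w => fderiv ℝ Φ w d) = fun w => Φ w * leftFrame Φ d w :=
      funext fun w => fderiv_apply_eq_mul_leftFrame (hunit w) d
    rw [fderiv_fderiv_apply_comm hΦ, hfun, fderiv_fun_mul_apply (hΦ1 z) (hleft d z), hv,
      fderiv_apply_eq_mul_leftFrame (hunit z), mul_zero, zero_add, mul_assoc]
  have hright : Differentiable ℝ (rightFrame Φ v) := (hdir v).mul hinv
  refine is_const_of_fderiv_eq_zero hright (fun z => ?_) z z'
  ext d
  change fderiv ℝ (fun w => fderiv ℝ Φ w v * Ring.inverse (Φ w)) z d = 0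
  rw [fderiv_fun_mul_apply (hdir v z) (hinv z), fderiv_inverse_apply (hΦ1 z) (hunit z), hsecond,
    fderiv_apply_eq_mul_leftFrame (hunit z), fderiv_apply_eq_mul_leftFrame (hunit z)]
  simp only [mul_assoc, Ring.inverse_mul_cancel_left _ _ (hunit z), mul_neg, neg_add_cancel]

theorem leftFrame_mul_exp_smul (hΦ : DifferentiableAt ℝ Φ z) (hz : IsUnit (Φ z))
    (ℓ : E →L[ℝ] ℝ) (A : R) (d : E) :
    leftFrame (fun w => Φ w * exp (ℓ w • A)) d z
      = exp (-(ℓ z • A)) * leftFrame Φ d z * exp (ℓ z • A) + ℓ d • A := by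
  have hexp : HasFDerivAt (fun w => exp (ℓ w • A)) (ℓ.smulRight (A * exp (ℓ z • A))) z := by
    have h := (hasDerivAt_exp_smul_const' A (ℓ z)).hasFDerivAt.comp z ℓ.hasFDerivAt
    exact h.congr_fderiv (by ext; simp)
  let +nondep : NormedAlgebra ℚ R := .restrictScalars ℚ ℝ R
  have hconj : exp (-(ℓ z • A)) * A * exp (ℓ z • A) = A :=
    ((Commute.refl A).smul_right (ℓ z)).exp_neg_mul_mul_exp_eq_self
  rw [leftFrame, fderiv_fun_mul_apply hΦ hexp.differentiableAt, hexp.fderiv,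
    Ring.inverse_mul (Or.inl hz), Ring.inverse_exp, ContinuousLinearMap.smulRight_apply, leftFrame]
  simp only [mul_add, mul_smul_comm, mul_assoc, Ring.inverse_mul_cancel_left _ _ hz]
  rw [← mul_assoc _ A, hconj, add_comm]

theorem apply_add_smul_eq_exp_smul_mul {v : E} {L : R} (hΦ : Differentiable ℝ Φ)
    (hL : ∀ z, fderiv ℝ Φ z v = L * Φ z) (z : E) (s : ℝ) :
    Φ (z + s • v) = exp (s • L) * Φ z := by
  have hline : ∀ s : ℝ, HasDerivAt (fun s : ℝ => Φ (z + s • v)) (L * Φ (z + s • v)) s := by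
    intro s
    have h := (hΦ _).hasFDerivAt.comp_hasDerivAt s
      (((hasDerivAt_id s).smul_const v).const_add z)
    simpa [Function.comp_def, hL] using h
  have hexp : ∀ s : ℝ, HasDerivAt (fun s : ℝ => exp ((-s) • L)) (-(L * exp ((-s) • L))) s := by
    intro s
    have h := (hasDerivAt_exp_smul_const' L (-s)).scomp s (hasDerivAt_neg s)
    simpa only [Function.comp_def, neg_one_smul] using h
  have hconst : ∀ s : ℝ, HasDerivAt (fun s : ℝ => exp ((-s) • L) * Φ (z + s • v)) 0 s := by
    intro s
    refine ((hexp s).mul (hline s)).congr_deriv ?_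
    rw [← mul_assoc, ← ((Commute.refl L).smul_right (-s)).exp_right.eq, neg_mul, neg_add_cancel]
  have h := is_const_of_deriv_eq_zero (fun s => (hconst s).differentiableAt)
    (fun s => (hconst s).deriv) s 0
  simp only [neg_zero, zero_smul, add_zero, exp_zero, one_mul] at h
  rw [← h, ← mul_assoc, exp_smul_mul_exp_neg_smul, one_mul]

end Frames

section Group

variable {R : Type*} [NormedRing R] [NormedAlgebra ℝ R] [CompleteSpace R]

theorem exp_smul_conj_mem {G : Set R} (hGmul : ∀ a ∈ G, ∀ b ∈ G, a * b ∈ G)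
    (hGinv : ∀ a ∈ G, IsUnit a ∧ Ring.inverse a ∈ G) {g X : R} (hg : g ∈ G)
    (hX : ∀ s : ℝ, exp (s • X) ∈ G) (s : ℝ) : exp (s • (g * X * Ring.inverse g)) ∈ G := by
  let +nondep : NormedAlgebra ℚ R := .restrictScalars ℚ ℝ R
  obtain ⟨u, rfl⟩ := (hGinv g hg).1
  rw [Ring.inverse_unit, ← smul_mul_assoc, ← mul_smul_comm, exp_units_conj, ← Ring.inverse_unit]
  exact hGmul _ (hGmul _ hg _ (hX s)) _ (hGinv _ hg).2

end Group

section Coordinates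

variable {R : Type*} [NormedRing R] [NormedAlgebra ℝ R]

lemma eq_smul_dir3_add (d : ℝ × ℝ × ℝ) : d = d.1 • dir3 0 + d.2.1 • dir3 1 + d.2.2 • dir3 2 := by
  simp [dir3]

lemma leftFrame_eq_smul_dir3_add (Φ : ℝ × ℝ × ℝ → R) (d z : ℝ × ℝ × ℝ) :
    leftFrame Φ d z = d.1 • leftFrame Φ (dir3 0) z + d.2.1 • leftFrame Φ (dir3 1) z
      + d.2.2 • leftFrame Φ (dir3 2) z := by
  simp only [leftFrame]
  conv_lhs => rw [eq_smul_dir3_add d]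
  simp only [map_add, map_smul, mul_add, mul_smul_comm]

lemma leftFrame_add_smul_dir3_one {Φ : ℝ × ℝ × ℝ → R} {g : Fin 3 → ℝ × ℝ → R}
    (hΦ : ∀ μ z, leftFrame Φ (dir3 μ) z = g μ (z.1, z.2.2)) (d z : ℝ × ℝ × ℝ) (s : ℝ) :
    leftFrame Φ d (z + s • dir3 1) = leftFrame Φ d z := by
  rw [leftFrame_eq_smul_dir3_add Φ d z, leftFrame_eq_smul_dir3_add Φ d]
  simp only [hΦ]
  simp [dir3]

variable [CompleteSpace R]

theorem leftFrame_mul_exp_neg_smul {U : ℝ × ℝ × ℝ → R} {A : R} {f : Fin 3 → ℝ × ℝ → R}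
    (hU : Differentiable ℝ U) (hunit : ∀ z, IsUnit (U z))
    (hframe : ∀ μ z, leftFrame U (dir3 μ) z
      = exp (-(z.2.1 • A)) * f μ (z.1, z.2.2) * exp (z.2.1 • A)) (μ : Fin 3) (z : ℝ × ℝ × ℝ) :
    leftFrame (fun w => U w * exp (-(w.2.1 • A))) (dir3 μ) z
      = f μ (z.1, z.2.2) - (dir3 μ).2.1 • A := by
  let yNeg : ℝ × ℝ × ℝ →L[ℝ] ℝ :=
    -(ContinuousLinearMap.fst ℝ ℝ ℝ).comp (ContinuousLinearMap.snd ℝ ℝ (ℝ × ℝ))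
  have hyNeg : ∀ w, yNeg w = -w.2.1 := fun w => rfl
  have hfun : (fun w => U w * exp (-(w.2.1 • A))) = fun w => U w * exp (yNeg w • A) := by
    simp only [hyNeg, neg_smul]
  rw [hfun, leftFrame_mul_exp_smul (hU z) (hunit z), hframe]
  rw [hyNeg, hyNeg, neg_smul, neg_neg, neg_smul, sub_eq_add_neg]
  simp only [mul_assoc, exp_mul_exp_neg, mul_one]
  rw [← mul_assoc, exp_mul_exp_neg, one_mul]

theorem apply_eq_exp_smul_mul_apply_mul_exp_smul {U : ℝ × ℝ × ℝ → R} {A : R}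
    {f : Fin 3 → ℝ × ℝ → R} (hU : ContDiff ℝ 2 U) (hunit : ∀ z, IsUnit (U z))
    (hframe : ∀ μ z, leftFrame U (dir3 μ) z
      = exp (-(z.2.1 • A)) * f μ (z.1, z.2.2) * exp (z.2.1 • A)) (x y t : ℝ) :
    U (x, y, t)
      = exp (y • (U 0 * (f 1 (0, 0) - A) * Ring.inverse (U 0))) * U (x, 0, t) * exp (y • A) := by
  set Ũ := fun w : ℝ × ℝ × ℝ => U w * exp (-(w.2.1 • A)) with hŨ
  have hŨunit : ∀ z, IsUnit (Ũ z) := fun z =>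
    (hunit z).mul ⟨⟨_, _, exp_mul_exp_neg _, exp_neg_mul_exp _⟩, rfl⟩
  have hŨsmooth : ContDiff ℝ 2 Ũ := hU.mul (contDiff_exp.comp (by fun_prop))
  have hŨframe : ∀ μ z, leftFrame Ũ (dir3 μ) z = f μ (z.1, z.2.2) - (dir3 μ).2.1 • A :=
    leftFrame_mul_exp_neg_smul (hU.differentiable two_ne_zero) hunit hframe
  have hright : ∀ z, rightFrame Ũ (dir3 1) z = rightFrame Ũ (dir3 1) 0 := fun z =>
    rightFrame_eq_of_fderiv_leftFrame_eq_zero hŨsmooth hŨunit (fun d =>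
      fderiv_apply_eq_zero_of_add_smul_eq
        (leftFrame_add_smul_dir3_one (g := fun μ q => f μ q - (dir3 μ).2.1 • A) hŨframe d)) z 0
  have hright0 : rightFrame Ũ (dir3 1) 0 = U 0 * (f 1 (0, 0) - A) * Ring.inverse (U 0) := by
    rw [rightFrame_eq_conj_leftFrame (hŨunit 0), hŨframe]
    simp [hŨ, dir3]
  have hline := apply_add_smul_eq_exp_smul_mul (hŨsmooth.differentiable two_ne_zero)
    (fun z => by rw [fderiv_apply_eq_rightFrame_mul (hŨunit z), hright, hright0]) (x, 0, t) y
  have hpt : ((x, 0, t) : ℝ × ℝ × ℝ) + y • dir3 1 = (x, y, t) := by simp [dir3]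
  simp only [hŨ, hpt, zero_smul, neg_zero, exp_zero, mul_one] at hline
  rw [← hline, mul_assoc, exp_neg_mul_exp, mul_one]

end Coordinates

end FrameField

open FrameField

theorem equivariant_frame_field_implies_conjugate_equivariant_general
    {N : ℕ}
    -- `G`, a closed subgroup of `GL(N,ℝ)`
    (GSet : Set (Mat N))
    (hGmul : ∀ a ∈ GSet, ∀ b ∈ GSet, a * b ∈ GSet)
    (hGinv : ∀ a ∈ GSet, IsUnit a ∧ Ring.inverse a ∈ GSet)
    -- `𝔤`, the Lie algebra of `G`
    (𝔤 : LieSubalgebra ℝ (Mat N))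
    (hLie : ∀ A : Mat N, A ∈ 𝔤 ↔ ∀ s : ℝ, NormedSpace.exp (s • A) ∈ GSet)
    -- a smooth map `U : ℝ³ → G` with equivariant frame field
    (U : ℝ × ℝ × ℝ → Mat N) (hU : ContDiff ℝ (⊤ : ℕ∞) U) (hUG : ∀ z, U z ∈ GSet)
    (A : Mat N) (hA : A ∈ 𝔤)
    (f : Fin 3 → (ℝ × ℝ → Mat N))
    (hf𝔤 : ∀ μ q, f μ q ∈ 𝔤)
    (hequiv : ∀ μ : Fin 3, ∀ z : ℝ × ℝ × ℝ,
      Kf U (dir3 μ) z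
        = NormedSpace.exp (-(z.2.1 • A)) * f μ (z.1, z.2.2) *
            NormedSpace.exp (z.2.1 • A)) :
    ∃ L ∈ 𝔤, ∃ V : ℝ × ℝ → Mat N,
      ContDiff ℝ (⊤ : ℕ∞) V ∧ (∀ q, V q ∈ GSet) ∧
      ∀ x y t : ℝ,
        U (x, y, t) = NormedSpace.exp (y • L) * V (x, t) * NormedSpace.exp (y • A) := by
  have hunit : ∀ z, IsUnit (U z) := fun z => (hGinv _ (hUG z)).1
  refine ⟨U 0 * (f 1 (0, 0) - A) * Ring.inverse (U 0), ?_, fun q => U (q.1, 0, q.2),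
    hU.comp (by fun_prop), fun q => hUG _, apply_eq_exp_smul_mul_apply_mul_exp_smul
      (hU.of_le (WithTop.coe_le_coe.2 le_top)) hunit hequiv⟩
  exact (hLie _).2 (exp_smul_conj_mem hGmul hGinv (hUG 0) ((hLie _).1 (sub_mem (hf𝔤 1 _) hA)))

/-- **Proposition 3, part 2: maps with equivariant frame fields are
conjugate-equivariant.** -/
theorem equivariant_frame_field_implies_conjugate_equivariant
    {N : ℕ}
    -- `G`, a closed subgroup of `GL(N,ℝ)`
    (GSet : Set (Mat N))
    (hG1 : (1 : Mat N) ∈ GSet)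
    (hGmul : ∀ a ∈ GSet, ∀ b ∈ GSet, a * b ∈ GSet)
    (hGinv : ∀ a ∈ GSet, IsUnit a ∧ Ring.inverse a ∈ GSet)
    (hGclosed : IsClosed {u : (Mat N)ˣ | (u : Mat N) ∈ GSet})
    -- `𝔤`, the Lie algebra of `G`
    (𝔤 : LieSubalgebra ℝ (Mat N))
    (hLie : ∀ A : Mat N, A ∈ 𝔤 ↔ ∀ s : ℝ, NormedSpace.exp (s • A) ∈ GSet)
    -- a smooth map `U : ℝ³ → G` with equivariant frame field
    (U : ℝ × ℝ × ℝ → Mat N) (hU : ContDiff ℝ (⊤ : ℕ∞) U) (hUG : ∀ z, U z ∈ GSet)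
    (A : Mat N) (hA : A ∈ 𝔤)
    (f : Fin 3 → (ℝ × ℝ → Mat N))
    (hf : ∀ μ, ContDiff ℝ (⊤ : ℕ∞) (f μ)) (hf𝔤 : ∀ μ q, f μ q ∈ 𝔤)
    (hequiv : ∀ μ : Fin 3, ∀ z : ℝ × ℝ × ℝ,
      Kf U (dir3 μ) z
        = NormedSpace.exp (-(z.2.1 • A)) * f μ (z.1, z.2.2) *
            NormedSpace.exp (z.2.1 • A)) :
    ∃ L ∈ 𝔤, ∃ V : ℝ × ℝ → Mat N,
      ContDiff ℝ (⊤ : ℕ∞) V ∧ (∀ q, V q ∈ GSet) ∧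
      ∀ x y t : ℝ,
        U (x, y, t) = NormedSpace.exp (y • L) * V (x, t) * NormedSpace.exp (y • A) :=
  equivariant_frame_field_implies_conjugate_equivariant_general GSet hGmul hGinv 𝔤 hLie U hU hUG A
    hA f hf𝔤 hequiv

end
end

section
/- Proposition A, part 2 (existence of translation invariant two-forms with non-zero torsion). Let 𝔤 be a finite-dimensional real semisimple Lie algebra whose Killing form κ is negative definite (compact type), with dim 𝔤 > 3. Then there exist a nonzero element R ∈ 𝔤 and a skew-symmetric bilinear form p on 𝔤 such that p is ad(R)-invariant, i.e. p([R,u],v) + p(u,[R,v]) = 0 for all u,v ∈ 𝔤, and p has non-zero torsion, i.e. the torsion form T_p(u,v,w) := p([u,v],w) + p([v,w],u) + p([w,u],v) is not identically zero. -/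
/-!
If `R ≠ 0` and `X ⊥ R` commute, `p = κ(R, ·) ∧ κ(X, ·)` is `ad R`-invariant by invariance of `κ`,
and `T_p(z, [R, z], X) = κ([R, z], [R, z]) κ(X, X)`, which is nonzero as soon as `[R, z] ≠ 0`.
So it suffices that a compact Lie algebra in which the centralizer of every `u ≠ 0` is `ℝ u` has
dimension at most `3`. For such `u`, the eigenvalues of `-(ad u)²` are the squares of the weights
of `ad u`. A pair `(v, w)` of top weight `θ` spans with `u` a copy of `su(2)`, whose ladder
operators `ad (v ± i w)` obey the `sl₂` string rule: a highest weight `ν` with string length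
`k + 1` satisfies `2ν = kθ`. If `dim > 3`, some weight vector is orthogonal to `u, v, w`; the rule
forces its weight to be `θ/2`. Then the string through `(v, w)` for the `su(2)` built on that
vector should have length `5`, but after two steps it reaches the zero weight space `ℝ u`, from
which two more steps lead to `0`.
-/

noncomputable section

/-- The Killing form `κ(u,v) = trace(ad u ∘ ad v)` of a Lie algebra. -/
def killing (𝓖 : Type*) [LieRing 𝓖] [LieAlgebra ℝ 𝓖] (u v : 𝓖) : ℝ :=
  LinearMap.trace ℝ 𝓖 ((LieAlgebra.ad ℝ 𝓖 u) ∘ₗ (LieAlgebra.ad ℝ 𝓖 v))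

open Module

section WeightPair

variable {L : Type*} [LieRing L]

/-- On the complexification, with `p` standing for `p.1 + i p.2`, this is `ad (v + i w)`;
`ladderDown` is `ad (v - i w)`. -/
def ladderUp (v w : L) (p : L × L) : L × L :=
  (⁅v, p.1⁆ - ⁅w, p.2⁆, ⁅w, p.1⁆ + ⁅v, p.2⁆)

def ladderDown (v w : L) (p : L × L) : L × L :=
  (⁅v, p.1⁆ + ⁅w, p.2⁆, ⁅v, p.2⁆ - ⁅w, p.1⁆)

@[simp] lemma ladderUp_zero (v w : L) : ladderUp v w 0 = 0 := by simp [ladderUp]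

variable [LieAlgebra ℝ L]

/-- `p.1 + i p.2` is an eigenvector of `ad u` with eigenvalue `-i ν`. -/
def IsWeightPair (u : L) (ν : ℝ) (p : L × L) : Prop :=
  ⁅u, p.1⁆ = ν • p.2 ∧ ⁅u, p.2⁆ = -ν • p.1

variable {u v w : L} {θ ν c : ℝ} {p : L × L}

lemma ladderDown_smul (r : ℝ) (p : L × L) : ladderDown v w (r • p) = r • ladderDown v w p := by
  ext <;> simp [ladderDown, smul_add, smul_sub]

lemma isWeightPair_ladderUp (hvw : IsWeightPair u θ (v, w)) (hp : IsWeightPair u ν p) :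
    IsWeightPair u (ν + θ) (ladderUp v w p) := by
  obtain ⟨hv, hw⟩ := hvw
  obtain ⟨h1, h2⟩ := hp
  constructor <;>
  · simp only [ladderUp, lie_add, lie_sub, leibniz_lie u v, leibniz_lie u w, hv, hw, h1, h2,
      smul_lie, lie_smul]
    module

lemma isWeightPair_ladderDown (hvw : IsWeightPair u θ (v, w)) (hp : IsWeightPair u ν p) :
    IsWeightPair u (ν - θ) (ladderDown v w p) := by
  obtain ⟨hv, hw⟩ := hvw
  obtain ⟨h1, h2⟩ := hp
  constructor <;>
  · simp only [ladderDown, lie_add, lie_sub, leibniz_lie u v, leibniz_lie u w, hv, hw, h1, h2,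
      smul_lie, lie_smul]
    module

lemma isWeightPair_iterate_ladderDown (hvw : IsWeightPair u θ (v, w)) (hp : IsWeightPair u ν p)
    (k : ℕ) : IsWeightPair u (ν - k * θ) ((ladderDown v w)^[k] p) := by
  induction k with
  | zero => simpa using hp
  | succ k ih =>
    rw [Function.iterate_succ_apply']
    convert isWeightPair_ladderDown hvw ih using 1
    push_cast; ring

lemma ladderUp_ladderDown (hc : ⁅v, w⁆ = c • u) (hp : IsWeightPair u ν p) :
    ladderUp v w (ladderDown v w p) = ladderDown v w (ladderUp v w p) - (2 * c * ν) • p := by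
  obtain ⟨h1, h2⟩ := hp
  have hv : ∀ z : L, ⁅v, ⁅w, z⁆⁆ = ⁅w, ⁅v, z⁆⁆ + c • ⁅u, z⁆ := fun z => by
    rw [leibniz_lie v w z, hc, smul_lie]; abel
  ext <;>
  · simp only [ladderUp, ladderDown, lie_add, lie_sub, hv, h1, h2, Prod.fst_sub, Prod.snd_sub,
      Prod.smul_fst, Prod.smul_snd]
    module

lemma ladderUp_ladderDown_iterate (hvw : IsWeightPair u θ (v, w)) (hc : ⁅v, w⁆ = c • u)
    (hp : IsWeightPair u ν p) (hup : ladderUp v w p = 0) (k : ℕ) :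
    ladderUp v w ((ladderDown v w)^[k + 1] p) =
      (-(c * (k + 1) * (2 * ν - k * θ))) • (ladderDown v w)^[k] p := by
  induction k with
  | zero =>
    rw [Function.iterate_one, ladderUp_ladderDown hc hp, hup]
    simp only [ladderDown, Prod.fst_zero, Prod.snd_zero, lie_zero, add_zero, sub_self,
      Prod.mk_zero_zero, Function.iterate_zero, id_eq, Nat.cast_zero]
    module
  | succ k ih =>
    rw [Function.iterate_succ_apply' _ (k + 1),
      ladderUp_ladderDown hc (isWeightPair_iterate_ladderDown hvw hp (k + 1)), ih, ladderDown_smul,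
      ← Function.iterate_succ_apply' (ladderDown v w) k]
    push_cast
    module

lemma exists_two_mul_eq_of_ladderUp_eq_zero (hvw : IsWeightPair u θ (v, w))
    (hp : IsWeightPair u ν p) (hc : ⁅v, w⁆ = c • u) (hc0 : c ≠ 0) (hp0 : p ≠ 0)
    (hup : ladderUp v w p = 0) {m : ℕ} (hm : (ladderDown v w)^[m] p = 0) :
    ∃ k < m, 2 * ν = k * θ := by
  classical
  have hex : ∃ m, (ladderDown v w)^[m] p = 0 := ⟨m, hm⟩
  obtain ⟨k, hk⟩ : ∃ k, Nat.find hex = k + 1 :=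
    Nat.exists_eq_succ_of_ne_zero fun h => hp0 (by simpa [h] using Nat.find_spec hex)
  have hzero : (ladderDown v w)^[k + 1] p = 0 := hk ▸ Nat.find_spec hex
  have hne : (ladderDown v w)^[k] p ≠ 0 := Nat.find_min hex (by omega)
  have hstring := ladderUp_ladderDown_iterate hvw hc hp hup k
  rw [hzero, ladderUp_zero, eq_comm, smul_eq_zero] at hstring
  refine ⟨k, by have := Nat.find_min' hex hm; omega, ?_⟩
  have hk1 : (k : ℝ) + 1 ≠ 0 := by positivity
  rcases hstring with h | h
  · have : 2 * ν - k * θ = 0 := by simpa [hc0, hk1] using h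
    linarith
  · exact absurd h hne

lemma ladderDown_ladderDown_smul (hvw : IsWeightPair u θ (v, w)) (hc : ⁅v, w⁆ = c • u)
    (a b : ℝ) : ladderDown v w (ladderDown v w (a • u, b • u)) = 0 := by
  have hvu : ⁅v, u⁆ = -(θ • w) := by rw [← lie_skew, hvw.1]
  have hwu : ⁅w, u⁆ = θ • v := by rw [← lie_skew, hvw.2]; module
  have hwv : ⁅w, v⁆ = -(c • u) := by rw [← lie_skew, hc]
  ext <;>
  · simp only [ladderDown, lie_smul, hvu, hwu, lie_neg, lie_add, lie_sub, lie_self, hc, hwv,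
      Prod.fst_zero, Prod.snd_zero]
    module

def IsWeightBound (u : L) (θ : ℝ) : Prop :=
  ∀ ν p, IsWeightPair u ν p → θ < |ν| → p = 0

lemma two_mul_eq_of_isWeightPair (htop : IsWeightBound u θ) (hvw : IsWeightPair u θ (v, w))
    (hc : ⁅v, w⁆ = c • u) (hc0 : c ≠ 0) (hp : IsWeightPair u ν p) (hp0 : p ≠ 0) (hν : 0 < ν)
    (hνθ : ν < θ) : θ = 2 * ν := by
  have hup : ladderUp v w p = 0 :=
    htop _ _ (isWeightPair_ladderUp hvw hp) (lt_abs.mpr (Or.inl (by linarith)))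
  have hdown : (ladderDown v w)^[2] p = 0 :=
    htop _ _ (isWeightPair_iterate_ladderDown hvw hp 2)
      (lt_abs.mpr (Or.inr (by push_cast; linarith)))
  obtain ⟨k, hk, hνk⟩ := exists_two_mul_eq_of_ladderUp_eq_zero hvw hp hc hc0 hp0 hup hdown
  interval_cases k <;> simp at hνk <;> linarith

/-- The string through `p` would have length `5`, but after two steps it lies in `ℝ u × ℝ u`,
where two more steps already vanish. -/
lemma eq_zero_of_isWeightPair_two_mul (hu : ∀ z, ⁅u, z⁆ = 0 → z ∈ ℝ ∙ u)
    (htop : IsWeightBound u (2 * ν)) {x y : L} (hxy : IsWeightPair u ν (x, y))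
    (hc : ⁅x, y⁆ = c • u) (hc0 : c ≠ 0) (hν : 0 < ν) (hp : IsWeightPair u (2 * ν) p) :
    p = 0 := by
  by_contra hp0
  have hup : ladderUp x y p = 0 :=
    htop _ _ (isWeightPair_ladderUp hxy hp) (lt_abs.mpr (Or.inl (by linarith)))
  obtain ⟨hmid₁, hmid₂⟩ := isWeightPair_iterate_ladderDown hxy hp 2
  obtain ⟨a, ha⟩ := Submodule.mem_span_singleton.mp (hu _ (by simpa using hmid₁))
  obtain ⟨b, hb⟩ := Submodule.mem_span_singleton.mp (hu _ (by simpa using hmid₂))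
  have hdown : (ladderDown x y)^[4] p = 0 := by
    have h2 : (ladderDown x y)^[2] p = (a • u, b • u) := Prod.ext ha.symm hb.symm
    rw [show 4 = 2 + 2 from rfl, Function.iterate_add_apply, h2]
    exact ladderDown_ladderDown_smul hxy hc a b
  obtain ⟨k, hk, hνk⟩ := exists_two_mul_eq_of_ladderUp_eq_zero hxy hp hc hc0 hp0 hup hdown
  interval_cases k <;> simp at hνk <;> linarith

def negAdSq (u : L) : Module.End ℝ L := -(LieAlgebra.ad ℝ L u ^ 2)

@[simp] lemma negAdSq_apply (u x : L) : negAdSq u x = -⁅u, ⁅u, x⁆⁆ := by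
  simp [negAdSq, pow_two]

lemma IsWeightPair.negAdSq_fst (hp : IsWeightPair u ν p) : negAdSq u p.1 = ν ^ 2 • p.1 := by
  rw [negAdSq_apply, hp.1, lie_smul, hp.2]; module

lemma IsWeightPair.negAdSq_snd (hp : IsWeightPair u ν p) : negAdSq u p.2 = ν ^ 2 • p.2 := by
  rw [negAdSq_apply, hp.2, lie_smul, hp.1]; module

lemma isWeightPair_of_negAdSq {x : L} (hν : 0 < ν) (hx : negAdSq u x = ν ^ 2 • x) :
    IsWeightPair u ν (x, ν⁻¹ • ⁅u, x⁆) := by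
  rw [negAdSq_apply, neg_eq_iff_eq_neg] at hx
  refine ⟨by simp [smul_smul, hν.ne'], ?_⟩
  simp only [lie_smul, hx, smul_neg, smul_smul]
  rw [pow_two, ← mul_assoc, inv_mul_cancel₀ hν.ne', one_mul, neg_smul]

lemma isWeightBound_of_forall_le (hθ : 0 ≤ θ)
    (hmax : ∀ ν x, x ≠ 0 → negAdSq u x = ν • x → ν ≤ θ ^ 2) : IsWeightBound u θ := by
  intro ν p hp hθν
  have hsq : θ ^ 2 < ν ^ 2 := by simpa using pow_lt_pow_left₀ hθν hθ two_ne_zero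
  ext
  · by_contra h
    exact (hmax _ _ h hp.negAdSq_fst).not_gt hsq
  · by_contra h
    exact (hmax _ _ h hp.negAdSq_snd).not_gt hsq

end WeightPair

lemma apply_mem_span_of_forall_eq_smul {R M : Type*} [Semiring R] [AddCommMonoid M] [Module R M]
    {f : Module.End R M} {s : Set M} (hs : ∀ a ∈ s, ∃ c : R, f a = c • a) :
    ∀ x ∈ Submodule.span R s, f x ∈ Submodule.span R s := by
  have : Submodule.span R s ≤ (Submodule.span R s).comap f := by
    refine Submodule.span_le.mpr fun a ha => ?_
    obtain ⟨c, hc⟩ := hs a ha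
    simpa [hc] using Submodule.smul_mem _ c (Submodule.subset_span ha)
  exact fun x hx => this hx

section SymmetricOperator

variable {E : Type*} [AddCommGroup E] [Module ℝ E] [FiniteDimensional ℝ E]
  {B : LinearMap.BilinForm ℝ E} {S : Module.End ℝ E}

lemma exists_eigenvector_mem_of_isSymm (hB : B.IsSymm) (hB_pos : ∀ x, x ≠ 0 → 0 < B x x)
    (hS : ∀ x y, B (S x) y = B x (S y)) {W : Submodule ℝ E} (hW : W ≠ ⊥)
    (hSW : ∀ x ∈ W, S x ∈ W) : ∃ μ : ℝ, ∃ x ∈ W, x ≠ 0 ∧ S x = μ • x := by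
  let core : InnerProductSpace.Core ℝ W :=
    { inner := fun a b => B a b
      conj_inner_symm := fun a b => by simpa using hB.eq b a
      re_inner_nonneg := fun a => by
        rcases eq_or_ne a 0 with rfl | ha
        · simp
        · exact (hB_pos a (by simpa using ha)).le
      add_left := fun a b c => by simp
      smul_left := fun a b r => by simp
      definite := fun a ha => by
        by_contra h
        exact (hB_pos a (by simpa using h)).ne' ha }
  let _ : NormedAddCommGroup W := core.toNormedAddCommGroup
  let _ : InnerProductSpace ℝ W := InnerProductSpace.ofCore core.toCore
  have : Nontrivial W := Submodule.nontrivial_iff_ne_bot.mpr hW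
  have hT : (S.restrict hSW).IsSymmetric := fun a b => hS a b
  obtain ⟨x, hx⟩ := hT.hasEigenvalue_iSup_of_finiteDimensional.exists_hasEigenvector
  exact ⟨_, x, x.2, by simpa using hx.2, congrArg Subtype.val hx.apply_eq_smul⟩

lemma exists_eigenvector_mem_orthogonal (hB : B.IsSymm) (hB_pos : ∀ x, x ≠ 0 → 0 < B x x)
    (hS : ∀ x y, B (S x) y = B x (S y)) {N : Submodule ℝ E} (hSN : ∀ x ∈ N, S x ∈ N)
    (hN : finrank ℝ N < finrank ℝ E) :
    ∃ μ : ℝ, ∃ x ∈ B.orthogonal N, x ≠ 0 ∧ S x = μ • x := by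
  refine exists_eigenvector_mem_of_isSymm hB hB_pos hS ?_ fun x hx n hn => ?_
  · intro h
    have := LinearMap.BilinForm.finrank_add_finrank_orthogonal' (B := B) N
    rw [h, finrank_bot] at this
    omega
  · rw [← hS]
    exact hx _ (hSN n hn)

lemma exists_eigenvector_forall_eigenvalue_le {ν : ℝ} {x : E} (hx : x ≠ 0) (hSx : S x = ν • x) :
    ∃ μ : ℝ, ∃ v, v ≠ 0 ∧ S v = μ • v ∧ ∀ ν x, x ≠ 0 → S x = ν • x → ν ≤ μ := by
  have hne : {μ | S.HasEigenvalue μ}.Nonempty :=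
    ⟨ν, Module.End.hasEigenvalue_of_hasEigenvector ⟨by simpa using hSx, hx⟩⟩
  obtain ⟨μ, hμ, hmax⟩ := Set.exists_max_image _ id (Module.End.finite_hasEigenvalue S) hne
  obtain ⟨v, hv⟩ := Module.End.HasEigenvalue.exists_hasEigenvector hμ
  exact ⟨μ, v, hv.2, hv.apply_eq_smul, fun ν x hx hSx =>
    hmax ν (Module.End.hasEigenvalue_of_hasEigenvector ⟨by simpa using hSx, hx⟩)⟩

end SymmetricOperator

section InvariantForm

variable {L : Type*} [LieRing L] [LieAlgebra ℝ L] {B : LinearMap.BilinForm ℝ L}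

lemma negAdSq_isSymm (hB_inv : B.lieInvariant L) (u x y : L) :
    B (negAdSq u x) y = B x (negAdSq u y) := by
  rw [negAdSq_apply, negAdSq_apply, map_neg, LinearMap.neg_apply, hB_inv, hB_inv, map_neg, neg_neg]

lemma eq_zero_of_lie_eq_zero_of_orthogonal (hB_pos : ∀ x, x ≠ 0 → 0 < B x x) {u z : L}
    (hu : ∀ z, ⁅u, z⁆ = 0 → z ∈ ℝ ∙ u) (hz : ⁅u, z⁆ = 0) (huz : B u z = 0) : z = 0 := by
  obtain ⟨a, rfl⟩ := Submodule.mem_span_singleton.mp (hu z hz)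
  rcases eq_or_ne u 0 with rfl | hu0
  · simp
  · have : a * B u u = 0 := by simpa using huz
    simpa [(hB_pos u hu0).ne', hu0] using this

lemma pos_of_negAdSq_eq_smul (hB_inv : B.lieInvariant L) (hB_pos : ∀ x, x ≠ 0 → 0 < B x x)
    {u x : L} (hu : ∀ z, ⁅u, z⁆ = 0 → z ∈ ℝ ∙ u) {μ : ℝ} (hx0 : x ≠ 0) (hux : B u x = 0)
    (hx : negAdSq u x = μ • x) : 0 < μ := by
  have hux' : ⁅u, x⁆ ≠ 0 := fun h => hx0 (eq_zero_of_lie_eq_zero_of_orthogonal hB_pos hu h hux)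
  have key : μ * B x x = B ⁅u, x⁆ ⁅u, x⁆ := by
    have := congrArg (B · x) hx
    simp only [negAdSq_apply, map_neg, LinearMap.neg_apply, hB_inv u ⁅u, x⁆ x, neg_neg,
      map_smul, LinearMap.smul_apply, smul_eq_mul] at this
    exact this.symm
  have h1 := hB_pos _ hux'
  have h2 := hB_pos _ hx0
  by_contra! h
  nlinarith

lemma exists_lie_eq_smul_of_isWeightPair (hB_inv : B.lieInvariant L)
    (hB_pos : ∀ x, x ≠ 0 → 0 < B x x) {u x y : L} (hu : ∀ z, ⁅u, z⁆ = 0 → z ∈ ℝ ∙ u) {ν : ℝ}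
    (hν : ν ≠ 0) (hx : x ≠ 0) (hxy : IsWeightPair u ν (x, y)) :
    ∃ c : ℝ, c ≠ 0 ∧ ⁅x, y⁆ = c • u := by
  have hy : y ≠ 0 := by
    rintro rfl
    exact hx (by simpa [hν] using hxy.2.symm)
  have hcomm : ⁅u, ⁅x, y⁆⁆ = 0 := by
    rw [leibniz_lie, hxy.1, hxy.2]
    simp
  obtain ⟨c, hc⟩ := Submodule.mem_span_singleton.mp (hu _ hcomm)
  refine ⟨c, ?_, hc.symm⟩
  rintro rfl
  have : B ⁅x, y⁆ u = ν * B y y := by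
    rw [hB_inv, ← lie_skew, hxy.1]
    simp
  rw [← hc, zero_smul, map_zero, LinearMap.zero_apply, eq_comm] at this
  exact (mul_ne_zero hν (hB_pos y hy).ne') this

lemma ladderDown_eq_zero_of_orthogonal (hB : B.IsSymm) (hB_inv : B.lieInvariant L)
    (hB_pos : ∀ x, x ≠ 0 → 0 < B x x) {u v w x y : L} (hu : ∀ z, ⁅u, z⁆ = 0 → z ∈ ℝ ∙ u)
    {θ : ℝ} (hθ : θ ≠ 0) (hvw : IsWeightPair u θ (v, w)) (hxy : IsWeightPair u θ (x, y))
    (hvx : B v x = 0) (hwx : B w x = 0) : ladderDown v w (x, y) = 0 := by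
  have hvu : ⁅v, u⁆ = -(θ • w) := by rw [← lie_skew, hvw.1]
  have hwu : ⁅w, u⁆ = θ • v := by rw [← lie_skew, hvw.2, neg_smul, neg_neg]
  have hxv : B x v = 0 := by rw [hB.eq]; exact hvx
  have hxw : B x w = 0 := by rw [hB.eq]; exact hwx
  have hyv : B y v = 0 := by
    have := hB_inv u x v
    rw [hxy.1, hvw.1] at this
    simpa [hxw, hθ] using this
  have hyw : B y w = 0 := by
    have := hB_inv u x w
    rw [hxy.1, hvw.2] at this
    simpa [hxv, hθ] using this
  obtain ⟨hq₁, hq₂⟩ := isWeightPair_ladderDown hvw hxy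
  rw [sub_self, zero_smul] at hq₁
  rw [sub_self, neg_zero, zero_smul] at hq₂
  refine Prod.ext (eq_zero_of_lie_eq_zero_of_orthogonal hB_pos hu hq₁ ?_)
    (eq_zero_of_lie_eq_zero_of_orthogonal hB_pos hu hq₂ ?_) <;>
  · rw [hB.eq]
    simp [ladderDown, hB_inv _ _ u, hvu, hwu, hxv, hxw, hyv, hyw]

lemma eq_zero_of_isWeightPair_of_orthogonal (hB : B.IsSymm) (hB_inv : B.lieInvariant L)
    (hB_pos : ∀ x, x ≠ 0 → 0 < B x x) {u v w x y : L} (hu : ∀ z, ⁅u, z⁆ = 0 → z ∈ ℝ ∙ u)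
    {θ c : ℝ} (hθ : 0 < θ) (htop : IsWeightBound u θ) (hvw : IsWeightPair u θ (v, w))
    (hc : ⁅v, w⁆ = c • u) (hc0 : c ≠ 0) (hxy : IsWeightPair u θ (x, y))
    (hvx : B v x = 0) (hwx : B w x = 0) : (x, y) = 0 := by
  by_contra h0
  have hup : ladderUp v w (x, y) = 0 :=
    htop _ _ (isWeightPair_ladderUp hvw hxy) (lt_abs.mpr (Or.inl (by linarith)))
  have hdown : (ladderDown v w)^[1] (x, y) = 0 :=
    ladderDown_eq_zero_of_orthogonal hB hB_inv hB_pos hu hθ.ne' hvw hxy hvx hwx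
  obtain ⟨k, hk, hθk⟩ := exists_two_mul_eq_of_ladderUp_eq_zero hvw hxy hc hc0 h0 hup hdown
  obtain rfl : k = 0 := by omega
  simp at hθk
  linarith

variable [FiniteDimensional ℝ L]

lemma exists_isWeightPair_forall_eigenvalue_le (hB : B.IsSymm) (hB_inv : B.lieInvariant L)
    (hB_pos : ∀ x, x ≠ 0 → 0 < B x x) {u : L} (hu0 : u ≠ 0)
    (hu : ∀ z, ⁅u, z⁆ = 0 → z ∈ ℝ ∙ u) (hL : 1 < finrank ℝ L) :
    ∃ θ : ℝ, ∃ v w : L, 0 < θ ∧ v ≠ 0 ∧ IsWeightPair u θ (v, w) ∧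
      ∀ ν x, x ≠ 0 → negAdSq u x = ν • x → ν ≤ θ ^ 2 := by
  obtain ⟨ν, x, hx, hx0, hSx⟩ := exists_eigenvector_mem_orthogonal hB hB_pos
    (negAdSq_isSymm hB_inv u) (N := ℝ ∙ u)
    (apply_mem_span_of_forall_eq_smul fun a ha => ⟨0, by simp [Set.mem_singleton_iff.mp ha]⟩)
    (by rwa [finrank_span_singleton hu0])
  obtain ⟨μ, v, hv0, hSv, hmax⟩ := exists_eigenvector_forall_eigenvalue_le hx0 hSx
  have hμ : 0 < μ := (pos_of_negAdSq_eq_smul hB_inv hB_pos hu hx0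
    (hx u (Submodule.mem_span_singleton_self u)) hSx).trans_le (hmax _ _ hx0 hSx)
  have hθ : 0 < √μ := Real.sqrt_pos.mpr hμ
  refine ⟨√μ, v, _, hθ, hv0, isWeightPair_of_negAdSq hθ ?_, ?_⟩ <;>
    rwa [Real.sq_sqrt hμ.le]

lemma exists_isWeightPair_lt (hB : B.IsSymm) (hB_inv : B.lieInvariant L)
    (hB_pos : ∀ x, x ≠ 0 → 0 < B x x) {u v w : L} (hu : ∀ z, ⁅u, z⁆ = 0 → z ∈ ℝ ∙ u)
    {θ c : ℝ} (hθ : 0 < θ) (hvw : IsWeightPair u θ (v, w)) (hc : ⁅v, w⁆ = c • u)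
    (hc0 : c ≠ 0) (hmax : ∀ ν x, x ≠ 0 → negAdSq u x = ν • x → ν ≤ θ ^ 2)
    (hL : 3 < finrank ℝ L) :
    ∃ ν : ℝ, ∃ x y : L, 0 < ν ∧ ν < θ ∧ x ≠ 0 ∧ IsWeightPair u ν (x, y) := by
  classical
  let N := Submodule.span ℝ (({u, v, w} : Finset L) : Set L)
  have hSN : ∀ z ∈ N, negAdSq u z ∈ N := apply_mem_span_of_forall_eq_smul fun a ha => by
    simp only [Finset.coe_insert, Finset.coe_singleton, Set.mem_insert_iff,
      Set.mem_singleton_iff] at ha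
    rcases ha with rfl | rfl | rfl
    exacts [⟨0, by simp⟩, ⟨_, hvw.negAdSq_fst⟩, ⟨_, hvw.negAdSq_snd⟩]
  have hN : finrank ℝ N < finrank ℝ L :=
    ((finrank_span_finset_le_card _).trans Finset.card_le_three).trans_lt hL
  obtain ⟨ν, x, hx, hx0, hSx⟩ :=
    exists_eigenvector_mem_orthogonal hB hB_pos (negAdSq_isSymm hB_inv u) hSN hN
  have hB_x : ∀ a ∈ ({u, v, w} : Finset L), B a x = 0 := fun a ha =>
    hx a (Submodule.subset_span ha)
  have hν : 0 < ν := pos_of_negAdSq_eq_smul hB_inv hB_pos hu hx0 (hB_x u (by simp)) hSx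
  have hνθ : ν < θ ^ 2 := by
    refine (hmax ν x hx0 hSx).lt_of_ne fun h => hx0 ?_
    have := eq_zero_of_isWeightPair_of_orthogonal hB hB_inv hB_pos hu hθ
      (isWeightBound_of_forall_le hθ.le hmax) hvw hc hc0
      (isWeightPair_of_negAdSq hθ (h ▸ hSx)) (hB_x v (by simp)) (hB_x w (by simp))
    exact (Prod.mk_eq_zero.mp this).1
  have hsqrt : 0 < √ν := Real.sqrt_pos.mpr hν
  exact ⟨√ν, x, _, hsqrt, (Real.sqrt_lt' hθ).mpr hνθ, hx0,
    isWeightPair_of_negAdSq hsqrt (by rwa [Real.sq_sqrt hν.le])⟩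

theorem finrank_le_three_of_forall_mem_span_of_lie_eq_zero (hB : B.IsSymm)
    (hB_inv : B.lieInvariant L) (hB_pos : ∀ x, x ≠ 0 → 0 < B x x)
    (hcen : ∀ R : L, R ≠ 0 → ∀ X, ⁅R, X⁆ = 0 → X ∈ ℝ ∙ R) :
    finrank ℝ L ≤ 3 := by
  by_contra! hL
  have : Nontrivial L := Module.nontrivial_of_finrank_pos (R := ℝ) (by omega)
  obtain ⟨u, hu0⟩ := exists_ne (0 : L)
  have hu := hcen u hu0
  obtain ⟨θ, v, w, hθ, hv0, hvw, hmax⟩ :=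
    exists_isWeightPair_forall_eigenvalue_le hB hB_inv hB_pos hu0 hu (by omega)
  obtain ⟨c, hc0, hc⟩ := exists_lie_eq_smul_of_isWeightPair hB_inv hB_pos hu hθ.ne' hv0 hvw
  obtain ⟨ν, x, y, hν, hνθ, hx0, hxy⟩ :=
    exists_isWeightPair_lt hB hB_inv hB_pos hu hθ hvw hc hc0 hmax hL
  have htop := isWeightBound_of_forall_le hθ.le hmax
  have hθν : θ = 2 * ν :=
    two_mul_eq_of_isWeightPair htop hvw hc hc0 hxy (by simp [hx0]) hν hνθ
  obtain ⟨c', hc'0, hc'⟩ := exists_lie_eq_smul_of_isWeightPair hB_inv hB_pos hu hν.ne' hx0 hxy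
  rw [hθν] at htop hvw
  exact hv0 (Prod.mk_eq_zero.mp (eq_zero_of_isWeightPair_two_mul hu htop hxy hc' hc'0 hν hvw)).1

end InvariantForm

section WedgeForm

variable {K L : Type*} [CommRing K] [LieRing L] [LieAlgebra K L] {κ : LinearMap.BilinForm K L}

lemma apply_lie_eq_zero_of_lie_eq_zero (hκ : κ.lieInvariant L) {R X : L} (h : ⁅R, X⁆ = 0)
    (a : L) : κ X ⁅R, a⁆ = 0 := by
  have := hκ R X a
  rwa [h, map_zero, LinearMap.zero_apply, eq_comm, neg_eq_zero] at this

def wedgeForm (κ : LinearMap.BilinForm K L) (R X : L) : LinearMap.BilinForm K L :=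
  LinearMap.BilinForm.linMulLin (κ R) (κ X) - LinearMap.BilinForm.linMulLin (κ X) (κ R)

lemma wedgeForm_apply (R X a b : L) :
    wedgeForm κ R X a b = κ R a * κ X b - κ X a * κ R b := by
  simp [wedgeForm, LinearMap.BilinForm.linMulLin_apply]

lemma wedgeForm_swap (R X a b : L) : wedgeForm κ R X a b = -wedgeForm κ R X b a := by
  simp only [wedgeForm_apply]
  ring

lemma wedgeForm_lie_add_lie (hκ : κ.lieInvariant L) {R X : L} (hRX : ⁅R, X⁆ = 0) (a b : L) :
    wedgeForm κ R X ⁅R, a⁆ b + wedgeForm κ R X a ⁅R, b⁆ = 0 := by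
  simp only [wedgeForm_apply, apply_lie_eq_zero_of_lie_eq_zero hκ hRX,
    apply_lie_eq_zero_of_lie_eq_zero hκ (lie_self R)]
  ring

lemma wedgeForm_torsion (hκ : κ.lieInvariant L) {R X : L} (hRX : ⁅R, X⁆ = 0) (hκRX : κ R X = 0)
    (z : L) :
    wedgeForm κ R X ⁅z, ⁅R, z⁆⁆ X + wedgeForm κ R X ⁅⁅R, z⁆, X⁆ z +
      wedgeForm κ R X ⁅X, z⁆ ⁅R, z⁆ = κ ⁅R, z⁆ ⁅R, z⁆ * κ X X := by
  have hXR : ⁅X, R⁆ = 0 := by rw [← lie_skew, hRX, neg_zero]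
  have hκR : κ R ⁅z, ⁅R, z⁆⁆ = κ ⁅R, z⁆ ⁅R, z⁆ := by
    rw [← neg_eq_iff_eq_neg.mpr (hκ z R ⁅R, z⁆), ← lie_skew, map_neg, LinearMap.neg_apply, neg_neg]
  rw [← lie_skew ⁅R, z⁆ X]
  simp only [wedgeForm_apply, map_neg, LinearMap.neg_apply, hκR, hκRX,
    apply_lie_eq_zero_of_lie_eq_zero hκ hRX, apply_lie_eq_zero_of_lie_eq_zero hκ hXR,
    apply_lie_eq_zero_of_lie_eq_zero hκ (lie_self R),
    apply_lie_eq_zero_of_lie_eq_zero hκ (lie_self X)]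
  ring

end WedgeForm

lemma exists_lie_ne_zero_of_killingForm_ne_zero {K L : Type*} [CommRing K] [LieRing L]
    [LieAlgebra K L] [Module.Free K L] [Module.Finite K L] {x y : L}
    (h : killingForm K L x y ≠ 0) : ∃ z : L, ⁅x, z⁆ ≠ 0 := by
  by_contra! hx
  have had : LieAlgebra.ad K L x = 0 := LinearMap.ext hx
  simp [killingForm_apply_apply, had] at h

lemma exists_lie_eq_zero_orthogonal_of_three_lt_finrank {L : Type*} [LieRing L] [LieAlgebra ℝ L]
    [FiniteDimensional ℝ L] {B : LinearMap.BilinForm ℝ L} (hB : B.IsSymm)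
    (hB_inv : B.lieInvariant L) (hB_pos : ∀ x, x ≠ 0 → 0 < B x x) (hL : 3 < finrank ℝ L) :
    ∃ R X : L, R ≠ 0 ∧ X ≠ 0 ∧ ⁅R, X⁆ = 0 ∧ B R X = 0 := by
  by_contra! h
  refine (finrank_le_three_of_forall_mem_span_of_lie_eq_zero hB hB_inv hB_pos
    fun R hR X hRX => ?_).not_gt hL
  set t := B R X / B R R
  have hX : X - t • R = 0 := by
    by_contra hX
    refine h R _ hR hX (by simp [hRX]) ?_
    simp only [t, map_sub, map_smul, smul_eq_mul]
    field_simp [(hB_pos R hR).ne']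
    ring
  exact Submodule.mem_span_singleton.mpr ⟨t, (sub_eq_zero.mp hX).symm⟩

theorem exists_invariant_two_form_with_torsion_general
    {𝓖 : Type*} [LieRing 𝓖] [LieAlgebra ℝ 𝓖] [FiniteDimensional ℝ 𝓖]
    -- `κ` is negative definite (compact type)
    (hnegdef : ∀ u : 𝓖, u ≠ 0 → killing 𝓖 u u < 0)
    -- `dim 𝓖 > 3`
    (hdim : 3 < Module.finrank ℝ 𝓖) :
    ∃ R : 𝓖, R ≠ 0 ∧ ∃ p : 𝓖 →ₗ[ℝ] 𝓖 →ₗ[ℝ] ℝ,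
      -- `p` is skew-symmetric,
      (∀ u v : 𝓖, p u v = - p v u) ∧
      -- `ad(R)`-invariant,
      (∀ u v : 𝓖, p ⁅R, u⁆ v + p u ⁅R, v⁆ = 0) ∧
      -- and has non-zero torsion
      (∃ u v w : 𝓖, p ⁅u, v⁆ w + p ⁅v, w⁆ u + p ⁅w, u⁆ v ≠ 0) := by
  have hκ : (killingForm ℝ 𝓖).lieInvariant 𝓖 := LieModule.traceForm_lieInvariant ℝ 𝓖 𝓖
  have hneg : ∀ u : 𝓖, u ≠ 0 → killingForm ℝ 𝓖 u u < 0 := hnegdef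
  obtain ⟨R, X, hR, hX, hRX, hκRX⟩ := exists_lie_eq_zero_orthogonal_of_three_lt_finrank
    (B := -killingForm ℝ 𝓖)
    (LinearMap.BilinForm.isSymm_def.mpr fun x y => by simp [LieModule.traceForm_comm ℝ 𝓖 𝓖 x y])
    (fun x y z => by simp [hκ x y z]) (fun x hx => by simpa using hneg x hx) hdim
  obtain ⟨z, hz⟩ := exists_lie_ne_zero_of_killingForm_ne_zero (hneg R hR).ne
  refine ⟨R, hR, wedgeForm (killingForm ℝ 𝓖) R X, wedgeForm_swap R X,
    wedgeForm_lie_add_lie hκ hRX, z, ⁅R, z⁆, X, ?_⟩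
  rw [wedgeForm_torsion hκ hRX (by simpa using hκRX)]
  exact mul_ne_zero (hneg _ hz).ne (hneg X hX).ne

/-- **Proposition A, part 2: existence of translation invariant two-forms with
non-zero torsion.** -/
theorem exists_invariant_two_form_with_torsion
    {𝓖 : Type*} [LieRing 𝓖] [LieAlgebra ℝ 𝓖] [FiniteDimensional ℝ 𝓖]
    -- `𝓖` is semisimple: `κ` is nondegenerate (Cartan's criterion)
    (hnondeg : ∀ u : 𝓖, (∀ v : 𝓖, killing 𝓖 u v = 0) → u = 0)
    -- `κ` is negative definite (compact type)
    (hnegdef : ∀ u : 𝓖, u ≠ 0 → killing 𝓖 u u < 0)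
    -- `dim 𝓖 > 3`
    (hdim : 3 < Module.finrank ℝ 𝓖) :
    ∃ R : 𝓖, R ≠ 0 ∧ ∃ p : 𝓖 →ₗ[ℝ] 𝓖 →ₗ[ℝ] ℝ,
      -- `p` is skew-symmetric,
      (∀ u v : 𝓖, p u v = - p v u) ∧
      -- `ad(R)`-invariant,
      (∀ u v : 𝓖, p ⁅R, u⁆ v + p u ⁅R, v⁆ = 0) ∧
      -- and has non-zero torsion
      (∃ u v w : 𝓖, p ⁅u, v⁆ w + p ⁅v, w⁆ u + p ⁅w, u⁆ v ≠ 0) :=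
  exists_invariant_two_form_with_torsion_general hnegdef hdim
end
end

section
/- Invariant two-forms with non-zero torsion from commuting pairs. Let 𝔤 be a finite-dimensional real Lie algebra with trivial center, and let g be an ad-invariant positive-definite inner product on 𝔤 (g([w,u],v) + g(u,[w,v]) = 0 for all u,v,w). Let a, b ∈ 𝔤 be linearly independent elements with [a,b] = 0, and define the skew-symmetric bilinear form p on 𝔤 by p(u,v) := g(a,u)·g(b,v) − g(b,u)·g(a,v). Then: (i) for every R in the span of {a, b}, p is ad(R)-invariant, i.e. p([R,u],v) + p(u,[R,v]) = 0 for all u,v ∈ 𝔤; and (ii) the torsion form T_p(u,v,w) := p([u,v],w) + p([v,w],u) + p([w,u],v) is not identically zero. -/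
/-!
STATEMENT 18: invariant two-forms with non-zero torsion constructed from a
commuting pair, on a finite-dimensional real Lie algebra with trivial center
equipped with an ad-invariant positive-definite inner product.
-/

theorem invariant_two_form_from_commuting_pair
    {𝓖 : Type*} [LieRing 𝓖] [LieAlgebra ℝ 𝓖] [FiniteDimensional ℝ 𝓖]
    -- `𝓖` has trivial center
    (hcenter : ∀ z : 𝓖, (∀ u : 𝓖, ⁅z, u⁆ = 0) → z = 0)
    -- an ad-invariant positive-definite inner product `g`
    (g : 𝓖 →ₗ[ℝ] 𝓖 →ₗ[ℝ] ℝ)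
    (hgsymm : ∀ u v : 𝓖, g u v = g v u)
    (hgpos : ∀ u : 𝓖, u ≠ 0 → 0 < g u u)
    (hginv : ∀ u v w : 𝓖, g ⁅w, u⁆ v + g u ⁅w, v⁆ = 0)
    -- linearly independent commuting elements `a, b`
    (a b : 𝓖) (hab : LinearIndependent ℝ ![a, b]) (hcomm : ⁅a, b⁆ = 0)
    -- the skew form `p(u,v) := g(a,u)g(b,v) − g(b,u)g(a,v)`
    (p : 𝓖 →ₗ[ℝ] 𝓖 →ₗ[ℝ] ℝ)
    (hp : ∀ u v : 𝓖, p u v = g a u * g b v - g b u * g a v) :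
    -- (i) `p` is `ad(R)`-invariant for every `R` in the span of `{a, b}`
    (∀ R ∈ Submodule.span ℝ ({a, b} : Set 𝓖), ∀ u v : 𝓖,
      p ⁅R, u⁆ v + p u ⁅R, v⁆ = 0) ∧
    -- (ii) the torsion form of `p` is not identically zero
    (∃ u v w : 𝓖, p ⁅u, v⁆ w + p ⁅v, w⁆ u + p ⁅w, u⁆ v ≠ 0) := by
  have ha0 : a ≠ 0 := by simpa using hab.ne_zero 0
  have hb0 : b ≠ 0 := by simpa using hab.ne_zero 1
  have hba : ⁅b, a⁆ = 0 := by rw [← lie_skew, hcomm, neg_zero]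
  -- invariance rewriting lemmas
  have hA : ∀ u v : 𝓖, g a ⁅u, v⁆ = g ⁅a, u⁆ v := by
    intro u v
    have h := hginv a v u
    have h2 : g ⁅u, a⁆ v = -g ⁅a, u⁆ v := by
      rw [(lie_skew u a).symm, map_neg, LinearMap.neg_apply]
    linarith
  have hB : ∀ u v : 𝓖, g b ⁅u, v⁆ = g ⁅b, u⁆ v := by
    intro u v
    have h := hginv b v u
    have h2 : g ⁅u, b⁆ v = -g ⁅b, u⁆ v := by
      rw [(lie_skew u b).symm, map_neg, LinearMap.neg_apply]
    linarith
  have hz : ∀ x y : 𝓖, ⁅x, y⁆ = 0 → ∀ u : 𝓖, g ⁅x, u⁆ y = 0 := by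
    intro x y h u
    have := hginv u y x
    rw [h] at this
    simpa using this
  constructor
  · -- part (i)
    intro R hR u v
    obtain ⟨s, t, hst⟩ := Submodule.mem_span_pair.mp hR
    have hRa : ⁅R, a⁆ = 0 := by
      rw [← hst]; simp [hba]
    have hRb : ⁅R, b⁆ = 0 := by
      rw [← hst]; simp [hcomm]
    have hga : ∀ x : 𝓖, g a ⁅R, x⁆ = 0 := by
      intro x
      have := hginv a x R
      rw [hRa] at this
      simpa using this
    have hgb : ∀ x : 𝓖, g b ⁅R, x⁆ = 0 := by
      intro x
      have := hginv b x R
      rw [hRb] at this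
      simpa using this
    simp [hp, hga, hgb]
  · -- part (ii)
    by_contra hT
    push_neg at hT
    -- strict Cauchy–Schwarz
    have hbb := hgpos b hb0
    have hc0 : g b b • a - g a b • b ≠ 0 := by
      intro h
      have h' : g b b • a + (-(g a b)) • b = 0 := by
        rw [neg_smul, ← sub_eq_add_neg]; exact h
      have := (LinearIndependent.pair_iff.mp (by simpa using hab)) _ _ h'
      exact (ne_of_gt hbb) this.1
    have hcc := hgpos _ hc0
    have hccval : g (g b b • a - g a b • b) (g b b • a - g a b • b)
        = g b b * (g a a * g b b - g a b * g a b) := by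
      simp only [map_sub, map_smul, LinearMap.sub_apply, LinearMap.smul_apply,
        smul_eq_mul]
      rw [hgsymm b a]
      ring
    have hD : 0 < g a a * g b b - g a b * g a b := by
      rw [hccval] at hcc
      nlinarith [hcc, hbb]
    -- all ad(a)-brackets vanish
    have hX : ∀ u v : 𝓖, g ⁅a, u⁆ v = 0 := by
      intro u v
      have h1 := hT u v b
      have h2 := hT u v a
      simp only [hp, hA, hB, hcomm, hba, lie_self, map_zero,
        LinearMap.zero_apply, hz a b hcomm, hz b a hba,
        hz a a (lie_self a), hz b b (lie_self b)] at h1 h2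
      have h3 : g ⁅a, u⁆ v * (g a a * g b b - g a b * g a b) = 0 := by
        rw [hgsymm b a] at h2
        linear_combination g a a * h1 - g a b * h2
      rcases mul_eq_zero.mp h3 with h | h
      · exact h
      · exact absurd h (ne_of_gt hD)
    have hau : ∀ u : 𝓖, ⁅a, u⁆ = 0 := by
      intro u
      by_contra h
      exact (ne_of_gt (hgpos _ h)) (hX u ⁅a, u⁆)
    exact ha0 (hcenter a hau)
end
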